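/- Any circuit on n qubits over the gate set {CNOT, T} containing k T gates can be implemented by a circuit over {CNOT, T} on n qubits plus m ancilla qubits (initialized to and returned in state |0⟩) with T-depth at most ⌈k/(m+1)⌉. -/

import Mathlib

open Matrix

noncomputable section

/-- `ω = e^{iπ/4}`. -/
def omega : ℂ := Complex.exp (Complex.I * (Real.pi / 4 : ℝ))

/-- Gates of the `{CNOT, T}` gate set on qubits labeled by `Q`. -/
inductive CTGate (Q : Type) where
  | cnot (c t : Q) (h : c ≠ t)
  | t (i : Q)

variable {Q : Type} [Fintype Q] [DecidableEq Q]

/-- The unitary of a gate on computational basis states `Q → ZMod 2`: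
`CNOT : |a⟩|b⟩ ↦ |a⟩|b ⊕ a⟩`, `T : |a⟩ ↦ ω^a |a⟩`. -/
def ctGateMatrix : CTGate Q → Matrix (Q → ZMod 2) (Q → ZMod 2) ℂ
  | .cnot c t _ => fun b a => if b = Function.update a t (a t + a c) then 1 else 0
  | .t i => fun b a => if b = a then (if a i = 1 then omega else 1) else 0

/-- The unitary of a circuit (a list of gates, applied in order). -/
def circMatrix (L : List (CTGate Q)) : Matrix (Q → ZMod 2) (Q → ZMod 2) ℂ :=
  (L.map ctGateMatrix).prod

/-- The number of `T` gates in a circuit. -/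
def tCount (L : List (CTGate Q)) : ℕ :=
  L.countP (fun g => match g with | .t _ => true | _ => false)

/-- A layer of a staged circuit: either a layer of CNOT gates (contributing no
`T`-depth) or a `T`-stage, i.e. `T` gates applied in parallel to a set of
distinct qubits. -/
inductive Layer (Q : Type) where
  | cnots (L : List {p : Q × Q // p.1 ≠ p.2})
  | tStage (s : Finset Q)

/-- The unitary of a layer. -/
def layerMatrix : Layer Q → Matrix (Q → ZMod 2) (Q → ZMod 2) ℂ
  | .cnots L => (L.map (fun p => ctGateMatrix (CTGate.cnot p.1.1 p.1.2 p.2))).prod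
  | .tStage s => Matrix.diagonal fun a => ∏ i ∈ s, (if a i = 1 then omega else 1)

/-- The unitary of a staged circuit. -/
def stagedMatrix (C : List (Layer Q)) : Matrix (Q → ZMod 2) (Q → ZMod 2) ℂ :=
  (C.map layerMatrix).prod

/-- The `T`-depth of a staged circuit: the number of `T`-stages. -/
def tDepth (C : List (Layer Q)) : ℕ :=
  C.countP (fun l => match l with | .tStage _ => true | _ => false)

/-- The embedding of an `n`-qubit state into `n + m` qubits, with the `m`
ancilla qubits in state `|0⟩`. -/
def embed (n m : ℕ) (v : (Fin n → ZMod 2) → ℂ) : ((Fin n ⊕ Fin m) → ZMod 2) → ℂ :=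
  fun b => if ∀ j : Fin m, b (Sum.inr j) = 0 then v (b ∘ Sum.inl) else 0

/-!
On a basis state `x`, a `{CNOT, T}` circuit acts as `x ↦ ω^(∑ⱼ ⟨Sⱼ, x⟩) · A x`, where `A` is the
linear map computed by its CNOTs and `S₁, …, Sₖ` are the parities (sets of input qubits) seen by
its `T` gates. The phase is diagonal, so its `k` factors can be applied in any grouping: a batch
of `m + 1` parities costs a single `T`-stage, by XOR-ing the first parity in place into one of its
own data qubits and the others into the `m` ancillas, applying `T` to these `m + 1` qubits and
undoing the CNOTs. After `⌈k/(m+1)⌉` such stages one CNOT layer applies `A`.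
-/

lemma Finset.sum_symmDiff_of_charTwo {ι R : Type*} [DecidableEq ι] [CommRing R] [CharP R 2]
    (S T : Finset ι) (f : ι → R) :
    ∑ i ∈ symmDiff S T, f i = ∑ i ∈ S, f i + ∑ i ∈ T, f i := by
  rw [symmDiff_eq_sup_sdiff_inf, Finset.sum_sdiff_eq_sub inf_le_sup, CharTwo.sub_eq_add]
  exact Finset.sum_union_inter

lemma List.prod_univ_getD_eq_prod_map {β M : Type*} [CommMonoid M] {m : ℕ} (l : List β) (d : β)
    (f : β → M) (hd : f d = 1) (hl : l.length ≤ m) :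
    ∏ j : Fin m, f (l[(j : ℕ)]?.getD d) = (l.map f).prod := by
  induction l generalizing m with
  | nil => simp [hd]
  | cons x l ih =>
    cases m with
    | zero => simp at hl
    | succ m =>
      rw [Fin.prod_univ_succ, List.map_cons, List.prod_cons, ← ih (by simpa using hl)]
      simp

def tPhase (x : ZMod 2) : ℂ := if x = 1 then omega else 1

def parityPhase {ι : Type} (S : Finset ι) (a : ι → ZMod 2) : ℂ := tPhase (∑ i ∈ S, a i)

lemma parityPhase_empty {ι : Type} (a : ι → ZMod 2) : parityPhase ∅ a = 1 := by
  simp [parityPhase, tPhase]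

section BasisStates

variable {ι κ : Type} [DecidableEq ι]

def CTGate.act : CTGate ι → (ι → ZMod 2) → ι → ZMod 2
  | .cnot c tgt _, a => Function.update a tgt (a tgt + a c)
  | .t _, a => a

def CTGate.phase : CTGate ι → (ι → ZMod 2) → ℂ
  | .cnot _ _ _, _ => 1
  | .t i, a => tPhase (a i)

lemma CTGate.act_act (g : CTGate ι) (a : ι → ZMod 2) : g.act (g.act a) = a := by
  cases g with
  | t i => rfl
  | cnot c t h =>
    ext x
    rcases eq_or_ne x t with rfl | hx
    · simp [act, Function.update_of_ne h, add_assoc, CharTwo.add_self_eq_zero]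
    · simp [act, Function.update_of_ne hx]

def circAct (L : List (CTGate ι)) (a : ι → ZMod 2) : ι → ZMod 2 := L.foldr CTGate.act a

@[simp] lemma circAct_nil (a : ι → ZMod 2) : circAct [] a = a := rfl

@[simp] lemma circAct_cons (g : CTGate ι) (L : List (CTGate ι)) (a : ι → ZMod 2) :
    circAct (g :: L) a = g.act (circAct L a) := rfl

lemma circAct_append (L M : List (CTGate ι)) (a : ι → ZMod 2) :
    circAct (L ++ M) a = circAct L (circAct M a) :=
  List.foldr_append

lemma circAct_reverse_circAct (L : List (CTGate ι)) (a : ι → ZMod 2) :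
    circAct L.reverse (circAct L a) = a := by
  induction L generalizing a with
  | nil => rfl
  | cons g L ih => simp [circAct_append, CTGate.act_act, ih]

def outputParity : List (CTGate ι) → ι → Finset ι
  | [], q => {q}
  | .cnot c t _ :: L, q =>
    if q = t then symmDiff (outputParity L t) (outputParity L c) else outputParity L q
  | .t _ :: L, q => outputParity L q

lemma circAct_apply (L : List (CTGate ι)) (a : ι → ZMod 2) (q : ι) :
    circAct L a q = ∑ i ∈ outputParity L q, a i := by
  induction L generalizing q with
  | nil => simp [outputParity]
  | cons g L ih =>
    cases g with
    | t i => simpa [outputParity, CTGate.act] using ih q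
    | cnot c t h =>
      rcases eq_or_ne q t with rfl | hq
      · simp [outputParity, CTGate.act, Finset.sum_symmDiff_of_charTwo, ih]
      · simp [outputParity, CTGate.act, hq, ih]

def tParities : List (CTGate ι) → List (Finset ι)
  | [] => []
  | .cnot _ _ _ :: L => tParities L
  | .t i :: L => outputParity L i :: tParities L

lemma length_tParities (L : List (CTGate ι)) : (tParities L).length = tCount L := by
  induction L with
  | nil => rfl
  | cons g L ih => cases g <;> simp [tParities, tCount, ih]

def cnotGate (p : {p : ι × ι // p.1 ≠ p.2}) : CTGate ι := .cnot p.1.1 p.1.2 p.2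

lemma tParities_map_cnotGate (G : List {p : ι × ι // p.1 ≠ p.2}) :
    tParities (G.map cnotGate) = [] := by
  induction G <;> simp [tParities, cnotGate, *]

def cnotPairs : List (CTGate ι) → List {p : ι × ι // p.1 ≠ p.2}
  | [] => []
  | .cnot c t h :: L => ⟨(c, t), h⟩ :: cnotPairs L
  | .t _ :: L => cnotPairs L

lemma circAct_map_cnotPairs (L : List (CTGate ι)) :
    circAct ((cnotPairs L).map cnotGate) = circAct L := by
  funext a
  induction L with
  | nil => rfl
  | cons g L ih => cases g <;> simp only [cnotPairs, List.map_cons, circAct_cons, ih] <;> rfl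

def liftPair (p : {p : ι × ι // p.1 ≠ p.2}) : {p : (ι ⊕ κ) × (ι ⊕ κ) // p.1 ≠ p.2} :=
  ⟨(.inl p.1.1, .inl p.1.2), fun h => p.2 (Sum.inl_injective h)⟩

lemma circAct_map_liftPair [DecidableEq κ] (G : List {p : ι × ι // p.1 ≠ p.2})
    (a : ι → ZMod 2) (z : κ → ZMod 2) :
    circAct ((G.map liftPair).map cnotGate) (Sum.elim a z) =
      Sum.elim (circAct (G.map cnotGate) a) z := by
  induction G with
  | nil => rfl
  | cons p G ih =>
    simp only [List.map_cons, circAct_cons, ih]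
    exact Sum.update_elim_inl

def xorPairs : List ι → ι → List {p : ι × ι // p.1 ≠ p.2}
  | [], _ => []
  | i :: l, p => if h : i = p then xorPairs l p else ⟨(i, p), h⟩ :: xorPairs l p

lemma circAct_xorPairs (l : List ι) (p : ι) (hp : p ∉ l) (a : ι → ZMod 2) :
    circAct ((xorPairs l p).map cnotGate) a = Function.update a p (a p + (l.map a).sum) := by
  induction l with
  | nil => simp [xorPairs]
  | cons i l ih =>
    have hip : i ≠ p := fun h => hp (h ▸ List.mem_cons_self)
    rw [xorPairs, dif_neg hip, List.map_cons, circAct_cons, ih (fun h => hp (.tail _ h))]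
    ext x
    rcases eq_or_ne x p with rfl | hx
    · simp only [CTGate.act, cnotGate, Function.update_self, Function.update_of_ne hip,
        List.map_cons, List.sum_cons]
      ring
    · simp [cnotGate, CTGate.act, hx]

def xorGadget (S : Finset ι) (p : ι) : List {p : ι × ι // p.1 ≠ p.2} := xorPairs S.toList p

lemma circAct_xorGadget {S : Finset ι} {p : ι} (hp : p ∉ S) (a : ι → ZMod 2) :
    circAct ((xorGadget S p).map cnotGate) a = Function.update a p (a p + ∑ i ∈ S, a i) := by
  rw [xorGadget, circAct_xorPairs _ _ (by simpa using hp), Finset.sum_map_toList]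

lemma circAct_xorGadget_inl [DecidableEq κ] {S : Finset ι} {i : ι} (hi : i ∉ S)
    (a : ι → ZMod 2) (z : κ → ZMod 2) :
    circAct ((xorGadget (S.map .inl) (.inl i)).map cnotGate) (Sum.elim a z) =
      Sum.elim (Function.update a i (a i + ∑ x ∈ S, a x)) z := by
  rw [circAct_xorGadget (by simpa using hi), Finset.sum_map, Sum.update_elim_inl]
  rfl

def loadAncillas [DecidableEq κ] (T : κ → Finset ι) (l : List κ) :
    List {p : (ι ⊕ κ) × (ι ⊕ κ) // p.1 ≠ p.2} :=
  l.flatMap fun j => xorGadget ((T j).map .inl) (.inr j)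

lemma circAct_loadAncillas [DecidableEq κ] (T : κ → Finset ι) (l : List κ)
    (a : ι → ZMod 2) (z : κ → ZMod 2) :
    circAct ((loadAncillas T l).map cnotGate) (Sum.elim a z) =
      Sum.elim a (fun j => z j + l.count j • ∑ i ∈ T j, a i) := by
  induction l with
  | nil => simp [loadAncillas]
  | cons j l ih =>
    rw [loadAncillas, List.flatMap_cons, List.map_append, circAct_append, ← loadAncillas, ih,
      circAct_xorGadget (by simp), Finset.sum_map, Sum.update_elim_inr]
    congr 1
    ext j'
    rcases eq_or_ne j' j with rfl | hj
    · simp [add_smul, add_assoc]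
    · simp [Function.update_of_ne hj, hj.symm]

end BasisStates

section MonomialMatrix

variable {α R : Type*} [DecidableEq α] [Semiring R]

def monomialMatrix (f : α → α) (p : α → R) : Matrix α α R :=
  fun b a => if b = f a then p a else 0

lemma monomialMatrix_mul [Fintype α] (f g : α → α) (p q : α → R) :
    monomialMatrix f p * monomialMatrix g q =
      monomialMatrix (f ∘ g) (fun a => p (g a) * q a) := by
  ext b a
  rw [mul_apply, Finset.sum_eq_single (g a)]
  · simp [monomialMatrix, ite_mul]
  · intro c _ hc
    simp [monomialMatrix, hc]
  · simp

lemma monomialMatrix_id (p : α → R) : monomialMatrix id p = diagonal p := by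
  ext b a
  rcases eq_or_ne b a with rfl | h <;> simp [monomialMatrix, *]

end MonomialMatrix

lemma ctGateMatrix_eq_monomialMatrix (g : CTGate Q) :
    ctGateMatrix g = monomialMatrix g.act g.phase := by
  cases g <;> rfl

lemma circMatrix_eq_monomialMatrix (L : List (CTGate Q)) :
    circMatrix L = monomialMatrix (circAct L)
      (fun a => ((tParities L).map (parityPhase · a)).prod) := by
  induction L with
  | nil =>
    ext b a
    simp [circMatrix, tParities, monomialMatrix, one_apply]
  | cons g L ih =>
    rw [circMatrix, List.map_cons, List.prod_cons, ← circMatrix, ih,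
      ctGateMatrix_eq_monomialMatrix, monomialMatrix_mul]
    congr 1
    funext a
    cases g <;> simp [tParities, CTGate.phase, parityPhase, circAct_apply]

lemma circMatrix_eq_mul_diagonal (L : List (CTGate Q)) :
    circMatrix L = monomialMatrix (circAct L) 1 *
      diagonal fun a => ((tParities L).map (parityPhase · a)).prod := by
  rw [circMatrix_eq_monomialMatrix, ← monomialMatrix_id, monomialMatrix_mul]
  simp

lemma layerMatrix_cnots (G : List {p : Q × Q // p.1 ≠ p.2}) :
    layerMatrix (.cnots G) = monomialMatrix (circAct (G.map cnotGate)) 1 := by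
  have h : layerMatrix (.cnots G) = circMatrix (G.map cnotGate) := by
    simp only [layerMatrix, circMatrix, List.map_map]
    rfl
  rw [h, circMatrix_eq_monomialMatrix, tParities_map_cnotGate]
  rfl

lemma tDepth_append {ι : Type} (C D : List (Layer ι)) :
    tDepth (C ++ D) = tDepth C + tDepth D :=
  List.countP_append

lemma stagedMatrix_cons (l : Layer Q) (C : List (Layer Q)) :
    stagedMatrix (l :: C) = layerMatrix l * stagedMatrix C :=
  List.prod_cons

lemma stagedMatrix_append (C D : List (Layer Q)) :
    stagedMatrix (C ++ D) = stagedMatrix C * stagedMatrix D := by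
  simp [stagedMatrix]

def conjugatedTStage (G : List {p : Q × Q // p.1 ≠ p.2}) (s : Finset Q) : List (Layer Q) :=
  [.cnots G.reverse, .tStage s, .cnots G]

lemma stagedMatrix_conjugatedTStage (G : List {p : Q × Q // p.1 ≠ p.2}) (s : Finset Q) :
    stagedMatrix (conjugatedTStage G s) =
      diagonal fun a => ∏ i ∈ s, tPhase (circAct (G.map cnotGate) a i) := by
  have hT : layerMatrix (.tStage s) = monomialMatrix id fun a => ∏ i ∈ s, tPhase (a i) := by
    rw [monomialMatrix_id]; rfl
  rw [conjugatedTStage, stagedMatrix_cons, stagedMatrix_cons, stagedMatrix_cons, stagedMatrix,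
    List.map_nil, List.prod_nil, mul_one, hT, layerMatrix_cnots, layerMatrix_cnots,
    monomialMatrix_mul, monomialMatrix_mul, ← monomialMatrix_id]
  congr 1
  · funext a
    simp only [Function.comp_apply, id, List.map_reverse, circAct_reverse_circAct]
  · ext a
    simp

section Ancillas

variable {n m : ℕ}

def Implements (M' : Matrix ((Fin n ⊕ Fin m) → ZMod 2) ((Fin n ⊕ Fin m) → ZMod 2) ℂ)
    (M : Matrix (Fin n → ZMod 2) (Fin n → ZMod 2) ℂ) : Prop :=
  ∀ v, M' *ᵥ embed n m v = embed n m (M *ᵥ v)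

lemma Implements.mul {A' B'} {A B : Matrix (Fin n → ZMod 2) (Fin n → ZMod 2) ℂ}
    (hA : Implements (m := m) A' A) (hB : Implements B' B) : Implements (A' * B') (A * B) := by
  intro v
  rw [← mulVec_mulVec, hB, hA, mulVec_mulVec]

lemma implements_one : Implements (n := n) (m := m) 1 1 := by
  simp [Implements]

lemma sum_mul_embed (F : ((Fin n ⊕ Fin m) → ZMod 2) → ℂ) (v : (Fin n → ZMod 2) → ℂ) :
    ∑ b, F b * embed n m v b = ∑ a, F (Sum.elim a 0) * v a := by
  rw [← (Equiv.sumArrowEquivProdArrow (Fin n) (Fin m) (ZMod 2)).symm.sum_comp,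
    Fintype.sum_prod_type]
  refine Finset.sum_congr rfl fun a _ => ?_
  rw [Fintype.sum_eq_single 0]
  · simp [embed, Equiv.sumArrowEquivProdArrow]
  · intro z hz
    obtain ⟨j, hj⟩ := Function.ne_iff.mp hz
    have : ¬∀ j, z j = 0 := fun h => hj (h j)
    simp [embed, Equiv.sumArrowEquivProdArrow, this]

lemma implements_of_apply_elim {M' M}
    (h : ∀ b a, M' b (Sum.elim a 0) = embed n m (fun b' => M b' a) b) : Implements M' M := by
  intro v
  ext b
  simp only [mulVec, dotProduct]
  rw [sum_mul_embed]
  simp only [h]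
  unfold embed
  split_ifs <;> simp [mulVec, dotProduct]

lemma implements_monomialMatrix {f' : ((Fin n ⊕ Fin m) → ZMod 2) → (Fin n ⊕ Fin m) → ZMod 2}
    {p' : ((Fin n ⊕ Fin m) → ZMod 2) → ℂ} {f : (Fin n → ZMod 2) → Fin n → ZMod 2}
    {p : (Fin n → ZMod 2) → ℂ}
    (hf : ∀ a, f' (Sum.elim a 0) = Sum.elim (f a) 0) (hp : ∀ a, p' (Sum.elim a 0) = p a) :
    Implements (monomialMatrix f' p') (monomialMatrix f p) := by
  refine implements_of_apply_elim fun b a => ?_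
  have hb : b = Sum.elim (f a) 0 ↔ (∀ j, b (.inr j) = 0) ∧ b ∘ Sum.inl = f a := by
    constructor
    · rintro rfl
      simp
    · rintro ⟨h0, h1⟩
      ext (i | j)
      · exact congrFun h1 i
      · exact h0 j
  simp only [monomialMatrix, embed, hf, hp, if_congr hb rfl rfl, ite_and]

lemma implements_cnots_cnotPairs (L : List (CTGate (Fin n))) :
    Implements (m := m) (layerMatrix (.cnots ((cnotPairs L).map liftPair)))
      (monomialMatrix (circAct L) 1) := by
  rw [layerMatrix_cnots]
  exact implements_monomialMatrix
    (fun a => by rw [circAct_map_liftPair, circAct_map_cnotPairs]) fun _ => rfl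

lemma exists_tStage_implements (S₀ : Finset (Fin n)) (SS : List (Finset (Fin n)))
    (hSS : SS.length ≤ m) :
    ∃ C : List (Layer (Fin n ⊕ Fin m)), tDepth C ≤ 1 ∧
      Implements (stagedMatrix C) (diagonal fun a => ((S₀ :: SS).map (parityPhase · a)).prod) := by
  -- ancilla `j` receives the `j`-th parity of `SS`, or `∅` (phase `1`) if there is none
  set T : Fin m → Finset (Fin n) := fun j => SS[(j : ℕ)]?.getD ∅
  set load := loadAncillas T Finset.univ.toList
  have hload (a : Fin n → ZMod 2) :
      circAct (load.map cnotGate) (Sum.elim a 0) = Sum.elim a fun j => ∑ i ∈ T j, a i := by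
    simp [load, circAct_loadAncillas,
      List.count_eq_one_of_mem (Finset.nodup_toList _) (Finset.mem_toList.2 (Finset.mem_univ _))]
  have hanc (a : Fin n → ZMod 2) : ∏ j, parityPhase (T j) a = (SS.map (parityPhase · a)).prod :=
    List.prod_univ_getD_eq_prod_map SS ∅ (parityPhase · a) (parityPhase_empty a) hSS
  rw [← monomialMatrix_id]
  rcases S₀.eq_empty_or_nonempty with rfl | ⟨i₀, hi₀⟩
  · refine ⟨conjugatedTStage load (Finset.univ.map .inr), le_rfl, ?_⟩
    rw [stagedMatrix_conjugatedTStage, ← monomialMatrix_id]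
    refine implements_monomialMatrix (fun _ => rfl) fun a => ?_
    simp only [hload, Finset.prod_map, Function.Embedding.inr_apply, Sum.elim_inr, List.map_cons,
      List.prod_cons, parityPhase_empty, one_mul, ← hanc]
    rfl
  · -- the ancillas are loaded first, as XOR-ing `S₀` into `i₀` changes the data register
    refine ⟨conjugatedTStage (xorGadget ((S₀.erase i₀).map .inl) (.inl i₀) ++ load)
      (.cons (.inl i₀) (Finset.univ.map .inr) (by simp)), le_rfl, ?_⟩
    rw [stagedMatrix_conjugatedTStage, ← monomialMatrix_id]
    refine implements_monomialMatrix (fun _ => rfl) fun a => ?_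
    simp only [List.map_append, circAct_append, hload,
      circAct_xorGadget_inl (Finset.notMem_erase i₀ S₀), Finset.prod_cons, Finset.prod_map,
      Function.Embedding.inr_apply, Sum.elim_inr, Sum.elim_inl,
      Function.update_self, Finset.add_sum_erase _ _ hi₀, List.map_cons, List.prod_cons, ← hanc]
    rfl

lemma exists_tStages_implements (d : ℕ) (SS : List (Finset (Fin n)))
    (h : SS.length ≤ d * (m + 1)) :
    ∃ C : List (Layer (Fin n ⊕ Fin m)), tDepth C ≤ d ∧
      Implements (stagedMatrix C) (diagonal fun a => (SS.map (parityPhase · a)).prod) := by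
  induction d generalizing SS with
  | zero =>
    obtain rfl : SS = [] := List.eq_nil_of_length_eq_zero (by simpa using h)
    exact ⟨[], le_rfl, by simpa [stagedMatrix] using implements_one⟩
  | succ d ih =>
    rcases SS with _ | ⟨S₀, SS⟩
    · exact ⟨[], Nat.zero_le _, by simpa [stagedMatrix] using implements_one⟩
    obtain ⟨C₁, hC₁, hI₁⟩ := exists_tStage_implements (m := m) S₀ (SS.take m) (by simp)
    obtain ⟨C₂, hC₂, hI₂⟩ := ih (SS.drop m) (by simp at h ⊢; rw [add_mul] at h; omega)
    refine ⟨C₁ ++ C₂, by rw [tDepth_append]; omega, ?_⟩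
    have hsplit : (diagonal fun a => ((S₀ :: SS).map (parityPhase · a)).prod) =
        (diagonal fun a => ((S₀ :: SS.take m).map (parityPhase · a)).prod) *
          diagonal fun a => ((SS.drop m).map (parityPhase · a)).prod := by
      rw [diagonal_mul_diagonal]
      congr 1
      ext a
      rw [← List.prod_append, ← List.map_append, List.cons_append, List.take_append_drop]
    rw [stagedMatrix_append, hsplit]
    exact hI₁.mul hI₂

end Ancillas

/-- Any `{CNOT, T}` circuit on `n` qubits with `k` `T` gates can be implemented
on `n` qubits plus `m` clean ancillas by a `{CNOT, T}` staged circuit of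
`T`-depth at most `⌈k/(m+1)⌉` (`= (k+m)/(m+1)` in natural division). -/
theorem stmt9 (n m k : ℕ) (L : List (CTGate (Fin n))) (hk : tCount L = k) :
    ∃ C : List (Layer (Fin n ⊕ Fin m)),
      tDepth C ≤ (k + m) / (m + 1) ∧
      ∀ v : (Fin n → ZMod 2) → ℂ,
        (stagedMatrix C) *ᵥ embed n m v = embed n m (circMatrix L *ᵥ v) := by
  have hlen : (tParities L).length ≤ (k + m) / (m + 1) * (m + 1) := by
    have := Nat.lt_div_mul_add (a := k + m) (b := m + 1) (by omega)
    rw [length_tParities]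
    omega
  obtain ⟨C, hdepth, hC⟩ := exists_tStages_implements _ (tParities L) hlen
  refine ⟨.cnots ((cnotPairs L).map liftPair) :: C, by simpa [tDepth] using hdepth, ?_⟩
  rw [stagedMatrix_cons, circMatrix_eq_mul_diagonal]
  exact (implements_cnots_cnotPairs L).mul hC

end
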